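/- Let C be a d-clutter on a finite vertex set V with C^+ = ∅ (C has no cliques on d + 2 vertices). If ⟨C⟩ is d-chorded, then ⟨C⟩ contains no d-cycles; that is, C is a CF-tree. -/

import Mathlib

namespace ClutterPaper

variable {α : Type*} [DecidableEq α]

/-- `C` is a uniform clutter on vertex set `V` all of whose circuits have cardinality `c`
(i.e. a `(c-1)`-dimensional uniform clutter). -/
def IsClutter (V : Finset α) (c : ℕ) (C : Finset (Finset α)) : Prop :=
  ∀ F ∈ C, F ⊆ V ∧ F.card = c

/-- The complement clutter `C̄`: all `c`-subsets of `V` not in `C`. -/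
def compClutter (V : Finset α) (c : ℕ) (C : Finset (Finset α)) : Finset (Finset α) :=
  V.powersetCard c \ C

/-- `C^∨ = { V \ F | F ∈ C̄ }`. -/
def clutterDual (V : Finset α) (c : ℕ) (C : Finset (Finset α)) : Finset (Finset α) :=
  (compClutter V c C).image fun F => V \ F

/-- `A` is a clique of the clutter `C` (with circuit cardinality `c`) on vertex set `V`:
all `c`-subsets of `A` are circuits. -/
def IsClique (V : Finset α) (c : ℕ) (C : Finset (Finset α)) (A : Finset α) : Prop :=
  A ⊆ V ∧ ∀ F ⊆ A, F.card = c → F ∈ C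

/-- The closed neighborhood `N_C[e] = e ∪ { v ∈ V | e ∪ {v} ∈ C }`. -/
def closedNbhd (V : Finset α) (C : Finset (Finset α)) (e : Finset α) : Finset α :=
  e ∪ V.filter fun v => insert v e ∈ C

/-- `e` is a maximal subcircuit of the clutter `C` with circuit cardinality `c`:
`e` has cardinality `c - 1` and is contained in some circuit. -/
def IsMS (c : ℕ) (C : Finset (Finset α)) (e : Finset α) : Prop :=
  e.card + 1 = c ∧ ∃ F ∈ C, e ⊆ F

/-- `e` is a simplicial maximal subcircuit: a maximal subcircuit whose closed
neighborhood is a clique. -/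
def IsSMS (V : Finset α) (c : ℕ) (C : Finset (Finset α)) (e : Finset α) : Prop :=
  IsMS c C e ∧ IsClique V c C (closedNbhd V C e)

/-- `e` is a free maximal subcircuit: contained in exactly one circuit. -/
def IsFreeMS (c : ℕ) (C : Finset (Finset α)) (e : Finset α) : Prop :=
  e.card + 1 = c ∧ ∃! F, F ∈ C ∧ e ⊆ F

/-- Deletion `C − e` of a maximal subcircuit: the circuits not containing `e`. -/
def delMS (C : Finset (Finset α)) (e : Finset α) : Finset (Finset α) :=
  C.filter fun F => ¬ e ⊆ F

/-- Deletion of a vertex: circuits (or faces) not containing `v`. -/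
def delVert (C : Finset (Finset α)) (v : α) : Finset (Finset α) :=
  C.filter fun F => v ∉ F

/-- Chordality of a uniform clutter (circuit cardinality `c`) on `V`: there is a sequence of
deletions of simplicial maximal subcircuits ending in the clutter with no circuits. -/
inductive Chordal (V : Finset α) (c : ℕ) : Finset (Finset α) → Prop
  | empty : Chordal V c ∅
  | step {C : Finset (Finset α)} (e : Finset α) :
      IsSMS V c C e → Chordal V c (delMS C e) → Chordal V c C

/-- The ascent `C⁺` of a clutter with circuit cardinality `c`: all `(c+1)`-subsets of `V`
that are cliques of `C`. -/
def ascent (V : Finset α) (c : ℕ) (C : Finset (Finset α)) : Finset (Finset α) :=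
  (V.powersetCard (c + 1)).filter fun A => A.powersetCard c ⊆ C

/-- The simplicial complex `⟨D⟩` generated by a clutter `D`: all subsets of its elements. -/
def complexOf (D : Finset (Finset α)) : Finset (Finset α) :=
  D.biUnion Finset.powerset

/-- A family of finsets is a simplicial complex if it is downward closed. -/
def IsComplex (Δ : Finset (Finset α)) : Prop :=
  ∀ F ∈ Δ, ∀ G ⊆ F, G ∈ Δ

/-- The facets (maximal faces) of a simplicial complex. -/
def facets (Δ : Finset (Finset α)) : Finset (Finset α) :=
  Δ.filter fun F => ∀ G ∈ Δ, F ⊆ G → F = G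

/-- `link_Δ(v) = { F \ {v} | v ∈ F ∈ Δ }`. -/
def link (Δ : Finset (Finset α)) (v : α) : Finset (Finset α) :=
  (Δ.filter fun F => v ∈ F).image fun F => F.erase v

/-- `v` is a shedding vertex of `Δ`: no face of `link_Δ(v)` is a facet of `Δ − v`. -/
def Shedding (Δ : Finset (Finset α)) (v : α) : Prop :=
  ∀ F ∈ link Δ v, F ∉ facets (delVert Δ v)

/-- Alexander dual of a simplicial complex on vertex set `V`:
`Δ^∨ = { V \ F | F ⊆ V, F ∉ Δ }`. -/
def alexDual (V : Finset α) (Δ : Finset (Finset α)) : Finset (Finset α) :=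
  (V.powerset.filter fun F => F ∉ Δ).image fun F => V \ F

/-- `Δ` is pure with all facets of cardinality `c` (dimension `c - 1`), and nonempty. -/
def PureDim (Δ : Finset (Finset α)) (c : ℕ) : Prop :=
  Δ.Nonempty ∧ ∀ F ∈ facets Δ, F.card = c

/-- Vertex decomposability of a simplicial complex. -/
inductive VDecomp : Finset (Finset α) → Prop
  | simplex {Δ : Finset (Finset α)} : (facets Δ).card = 1 → VDecomp Δ
  | shed {Δ : Finset (Finset α)} (v : α) : Shedding Δ v →
      VDecomp (link Δ v) → VDecomp (delVert Δ v) → VDecomp Δ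

/-- The vertex set of a clutter (or of the complex it generates). -/
def vertexSet (Ω : Finset (Finset α)) : Finset α :=
  Ω.biUnion id

/-- `Ω` (given by its set of facets, each of cardinality `d+1`) is a `d`-cycle:
nonempty, pure of dimension `d`, `d`-path connected, and every `(d-1)`-dimensional
face lies in an even number of `d`-faces. -/
def IsCycle (d : ℕ) (Ω : Finset (Finset α)) : Prop :=
  Ω.Nonempty ∧ (∀ F ∈ Ω, F.card = d + 1) ∧
    (∀ F ∈ Ω, ∀ G ∈ Ω,
      Relation.ReflTransGen (fun A B => A ∈ Ω ∧ B ∈ Ω ∧ (A ∩ B).card = d) F G) ∧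
    ∀ e : Finset α, e.card = d → Even ((Ω.filter fun F => e ⊆ F).card)

/-- A face-minimal `d`-cycle: no `d`-cycle has a strictly smaller set of `d`-faces. -/
def FaceMinimalCycle (d : ℕ) (Ω : Finset (Finset α)) : Prop :=
  IsCycle d Ω ∧ ∀ Ω' : Finset (Finset α), IsCycle d Ω' → Ω' ⊆ Ω → Ω' = Ω

/-- `Ω` is `d`-complete: it contains every `(d+1)`-subset of its vertex set. -/
def DComplete (d : ℕ) (Ω : Finset (Finset α)) : Prop :=
  ∀ F ⊆ vertexSet Ω, F.card = d + 1 → F ∈ Ω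

/-- The complex `⟨C⟩` generated by the `d`-dimensional clutter `C` is `d`-chorded. -/
def Chorded (d : ℕ) (C : Finset (Finset α)) : Prop :=
  ∀ Ω : Finset (Finset α), FaceMinimalCycle d Ω → Ω ⊆ C → ¬ DComplete d Ω →
    ∃ (k : ℕ) (Ωs : Fin k → Finset (Finset α)), 2 ≤ k ∧
      (∀ i, IsCycle d (Ωs i) ∧ Ωs i ⊆ C) ∧
      (∀ F ∈ Ω, ∃ i, F ∈ Ωs i) ∧
      (∀ F ∈ Ω, Odd ((Finset.univ.filter fun i => F ∈ Ωs i).card)) ∧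
      (∀ F : Finset α, (∃ i, F ∈ Ωs i) → F ∉ Ω →
        Even ((Finset.univ.filter fun i => F ∈ Ωs i).card)) ∧
      ∀ i, vertexSet (Ωs i) ⊂ vertexSet Ω

/-- The circuits of `D` admit an admissible order. -/
def HasAdmissibleOrder (D : Finset (Finset α)) : Prop :=
  ∃ (t : ℕ) (F : Fin t → Finset α), Function.Injective F ∧
    (∀ G, G ∈ D ↔ ∃ i, F i = G) ∧
    ∀ i j : Fin t, j < i →
      ∃ l ∈ F j \ F i, ∃ k : Fin t, k < i ∧ F k \ F i = {l}

/-- Contraction `D/v` of a (not necessarily uniform) clutter: the minimal sets of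
`{ e \ {v} | e ∈ D }`. -/
def contractAux (D : Finset (Finset α)) (v : α) : Finset (Finset α) :=
  D.image fun e => e.erase v

def contract (D : Finset (Finset α)) (v : α) : Finset (Finset α) :=
  (contractAux D v).filter fun e => ∀ f ∈ contractAux D v, f ⊆ e → f = e

/-- `D` has a simplicial vertex (trivially true if `D` has no vertices). -/
def HasSimpVertex (D : Finset (Finset α)) : Prop :=
  vertexSet D = ∅ ∨ ∃ v ∈ vertexSet D, ∀ e₁ ∈ D, ∀ e₂ ∈ D, v ∈ e₁ → v ∈ e₂ →
    ∃ e₃ ∈ D, e₃ ⊆ (e₁ ∪ e₂).erase v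

/-- `D` is W-chordal: every clutter obtained from `D` by a sequence of vertex deletions
and contractions has a simplicial vertex. -/
def WChordal (D : Finset (Finset α)) : Prop :=
  ∀ D' : Finset (Finset α),
    Relation.ReflTransGen (fun X Y => ∃ v, Y = delVert X v ∨ Y = contract X v) D D' →
    HasSimpVertex D'

/-!
Take a `d`-cycle in `C` with the fewest vertices and a face-minimal cycle `Ω` inside it.
`Ω` is not `d`-complete: a cycle is never a single `d`-face, so some vertex `v` of `Ω` lies
outside a face `F`, and `insert v F` would be a `(d + 2)`-clique of `C`. Chordedness then
produces a cycle in `C` on strictly fewer vertices than `Ω`, contradicting minimality.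
-/

lemma IsCycle.exists_faceMinimalCycle_subset {d : ℕ} {Ω : Finset (Finset α)}
    (hΩ : IsCycle d Ω) : ∃ Ω' ⊆ Ω, FaceMinimalCycle d Ω' := by
  obtain ⟨Ω', hΩ'Ω, hmin⟩ := exists_minimal_le_of_wellFoundedLT (IsCycle d) Ω hΩ
  exact ⟨Ω', hΩ'Ω, hmin.1, fun Ω'' hΩ'' hsub => le_antisymm hsub (hmin.2 hΩ'' hsub)⟩

lemma mem_vertexSet {Ω : Finset (Finset α)} {v : α} : v ∈ vertexSet Ω ↔ ∃ F ∈ Ω, v ∈ F := by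
  simp [vertexSet]

lemma subset_vertexSet {Ω : Finset (Finset α)} {F : Finset α} (hF : F ∈ Ω) :
    F ⊆ vertexSet Ω :=
  fun _ hv => mem_vertexSet.2 ⟨F, hF, hv⟩

lemma vertexSet_mono {Ω Ω' : Finset (Finset α)} (h : Ω ⊆ Ω') : vertexSet Ω ⊆ vertexSet Ω' :=
  Finset.biUnion_subset_biUnion_of_subset_left _ h

lemma IsClutter.vertexSet_subset {V : Finset α} {c : ℕ} {C Ω : Finset (Finset α)}
    (hC : IsClutter V c C) (hΩC : Ω ⊆ C) : vertexSet Ω ⊆ V := by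
  intro v hv
  obtain ⟨F, hF, hvF⟩ := mem_vertexSet.1 hv
  exact (hC F (hΩC hF)).1 hvF

lemma IsCycle.ne_singleton {d : ℕ} {Ω : Finset (Finset α)} (hΩ : IsCycle d Ω) (F : Finset α) :
    Ω ≠ {F} := by
  rintro rfl
  obtain ⟨e, heF, he⟩ := Finset.exists_subset_card_eq (s := F) (n := d)
    (by simp [hΩ.2.1 F (Finset.mem_singleton_self F)])
  have hodd := hΩ.2.2.2 e he
  rw [Finset.filter_singleton, if_pos heF, Finset.card_singleton] at hodd
  exact Nat.not_even_one hodd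

lemma IsCycle.exists_mem_vertexSet_notMem {d : ℕ} {Ω : Finset (Finset α)} {F : Finset α}
    (hΩ : IsCycle d Ω) (hF : F ∈ Ω) : ∃ v ∈ vertexSet Ω, v ∉ F := by
  by_contra! hsub
  refine hΩ.ne_singleton F (Finset.eq_singleton_iff_unique_mem.2 ⟨hF, fun G hG => ?_⟩)
  exact Finset.eq_of_subset_of_card_le (fun v hv => hsub v (subset_vertexSet hG hv))
    (by rw [hΩ.2.1 F hF, hΩ.2.1 G hG])

lemma DComplete.mem_ascent {V : Finset α} {d : ℕ} {C Ω : Finset (Finset α)} {A : Finset α}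
    (hC : IsClutter V (d + 1) C) (hΩC : Ω ⊆ C) (hΩ : DComplete d Ω)
    (hA : A ⊆ vertexSet Ω) (hAcard : A.card = d + 2) : A ∈ ascent V (d + 1) C := by
  refine Finset.mem_filter.2
    ⟨Finset.mem_powersetCard.2 ⟨hA.trans (hC.vertexSet_subset hΩC), hAcard⟩, fun F hF => ?_⟩
  obtain ⟨hFA, hFcard⟩ := Finset.mem_powersetCard.1 hF
  exact hΩC (hΩ F (hFA.trans hA) hFcard)

lemma IsCycle.not_dComplete_of_ascent_eq_empty {V : Finset α} {d : ℕ} {C Ω : Finset (Finset α)}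
    (hC : IsClutter V (d + 1) C) (hasc : ascent V (d + 1) C = ∅) (hΩ : IsCycle d Ω)
    (hΩC : Ω ⊆ C) : ¬ DComplete d Ω := by
  intro hcomp
  obtain ⟨F, hF⟩ := hΩ.1
  obtain ⟨v, hv, hvF⟩ := hΩ.exists_mem_vertexSet_notMem hF
  have hA : insert v F ∈ ascent V (d + 1) C :=
    hcomp.mem_ascent hC hΩC (Finset.insert_subset hv (subset_vertexSet hF))
      (by rw [Finset.card_insert_of_notMem hvF, hΩ.2.1 F hF])
  simp [hasc] at hA

lemma Chorded.exists_cycle_vertexSet_ssubset {d : ℕ} {C Ω : Finset (Finset α)}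
    (h : Chorded d C) (hΩ : FaceMinimalCycle d Ω) (hΩC : Ω ⊆ C) (hcomp : ¬ DComplete d Ω) :
    ∃ Ω', IsCycle d Ω' ∧ Ω' ⊆ C ∧ vertexSet Ω' ⊂ vertexSet Ω := by
  obtain ⟨k, Ωs, hk, hcyc, -, -, -, hverts⟩ := h Ω hΩ hΩC hcomp
  let i : Fin k := ⟨0, by omega⟩
  exact ⟨Ωs i, (hcyc i).1, (hcyc i).2, hverts i⟩

/-- If the `d`-clutter `C` has empty ascent and `⟨C⟩` is `d`-chorded, then
`⟨C⟩` contains no `d`-cycles, i.e. `C` is a CF-tree. -/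
theorem chorded_empty_ascent_cftree (V : Finset α) (d : ℕ) (C : Finset (Finset α))
    (hC : IsClutter V (d + 1) C)
    (hasc : ascent V (d + 1) C = ∅) (h : Chorded d C) :
    ¬ ∃ Ω : Finset (Finset α), IsCycle d Ω ∧ Ω ⊆ C := by
  intro hex
  obtain ⟨Ω, ⟨hΩ, hΩC⟩, hmin⟩ := exists_minimalFor_of_wellFoundedLT
    (fun Ω : Finset (Finset α) => IsCycle d Ω ∧ Ω ⊆ C) (fun Ω => (vertexSet Ω).card) hex
  obtain ⟨Ω₁, hΩ₁Ω, hΩ₁⟩ := hΩ.exists_faceMinimalCycle_subset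
  have hΩ₁C : Ω₁ ⊆ C := hΩ₁Ω.trans hΩC
  obtain ⟨Ω₂, hΩ₂, hΩ₂C, hss⟩ := h.exists_cycle_vertexSet_ssubset hΩ₁ hΩ₁C
    (hΩ₁.1.not_dComplete_of_ascent_eq_empty hC hasc hΩ₁C)
  have hlt : (vertexSet Ω₂).card < (vertexSet Ω).card :=
    (Finset.card_lt_card hss).trans_le (Finset.card_le_card (vertexSet_mono hΩ₁Ω))
  exact hlt.not_ge (hmin ⟨hΩ₂, hΩ₂C⟩ hlt.le)

end ClutterPaper
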